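/- Let 0 < ε ≤ 1/4 and let h : [0, ∞) × ℝ → ℝ be continuously differentiable and satisfy, for every t ≥ 0: h(t, ·) is 2π-periodic, h(t, θ + π/2) = h(t, θ) for all θ, h(t, −θ) = −h(t, θ) for all θ, h(t, θ) ≥ 0 for θ ∈ [0, π/4], and h(t, θ) = 0 for θ ∈ [ε, π/4]. Suppose h solves ∂ₜ h(t, θ) + 2 H(t, θ) ∂_θ h(t, θ) = 0 for all t ≥ 0 and θ, where H(t, θ) := (1/4) ∫₀^{π/4} ( |sin(2θ − 2θ')| − |sin(2θ + 2θ')| ) h(t, θ') dθ'. Let I(t) := ∫₀^{π/4} h(t, θ) dθ and assume I(0) > 0. Then for all t ≥ 0: 1/( t + I(0)^{−1} ) ≤ I(t) ≤ 1/( (1 − 8ε²) t + I(0)^{−1} ). -/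

import Mathlib

open Real Set MeasureTheory intervalIntegral

noncomputable section

/-- The stream-function coefficient of the 1D model for radially homogeneous 2D Euler,
for 4-fold symmetric odd data:
`H(θ) = (1/4) ∫₀^{π/4} (|sin(2θ − 2θ')| − |sin(2θ + 2θ')|) h(θ') dθ'`. -/
def streamH (h : ℝ → ℝ) (θ : ℝ) : ℝ :=
  1 / 4 * ∫ θ' in (0 : ℝ)..(Real.pi / 4),
    (|Real.sin (2 * θ - 2 * θ')| - |Real.sin (2 * θ + 2 * θ')|) * h θ'

/-- The mass `I(t) = ∫₀^{π/4} h(t,θ) dθ`. -/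
def mass (h : ℝ → ℝ → ℝ) (t : ℝ) : ℝ := ∫ θ in (0 : ℝ)..(Real.pi / 4), h t θ

/-!
Write `A(θ) = ∫₀^θ sin(2x) h(x) dx` and `B(θ) = ∫_θ^{π/4} cos(2x) h(x) dx`. Splitting the
kernel at `θ' = θ` gives `H = -(cos 2θ · A + sin 2θ · B) / 2` on `[0, π/4]`, and
`-2H ∂_θh` is then the θ-derivative of `(cos 2θ · A + sin 2θ · B) h + A² + B²`. Hence
`I' = S² - C²` with `S = ∫ sin(2θ) h` and `C = ∫ cos(2θ) h`. As `h ≥ 0` is supported in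
`[0, ε]`, `0 ≤ S ≤ 2εI` and `(1 - 2ε²) I ≤ C ≤ I`, so `-I² ≤ I' ≤ -(1 - 8ε²) I²`, i.e.
`(1/I)' ∈ [1 - 8ε², 1]`, and integrating gives the two bounds.
-/

theorem monotoneOn_Ici_of_hasDerivAt_nonneg {f f' : ℝ → ℝ} {a : ℝ}
    (hf : ∀ t ∈ Ici a, HasDerivAt f (f' t) t) (hf' : ∀ t ∈ Ici a, 0 ≤ f' t) :
    MonotoneOn f (Ici a) :=
  monotoneOn_of_hasDerivWithinAt_nonneg (convex_Ici a)
    (fun t ht => (hf t ht).continuousAt.continuousWithinAt)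
    (fun t ht => (hf t (interior_subset ht)).hasDerivWithinAt)
    (fun t ht => hf' t (interior_subset ht))

section Riccati

variable {f f' : ℝ → ℝ} {a b : ℝ}

/-- `f(t) e^{a f(0) t}` is nondecreasing, because `f' ≥ -a f² ≥ -a f(0) f` while `0 ≤ f ≤ f(0)`. -/
theorem pos_of_neg_mul_sq_le_deriv (hf : ∀ t ∈ Ici 0, HasDerivAt f (f' t) t) (hf0 : 0 < f 0)
    (hnonneg : ∀ t ∈ Ici 0, 0 ≤ f t) (hle : ∀ t ∈ Ici 0, f t ≤ f 0) (ha : 0 ≤ a)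
    (hlower : ∀ t ∈ Ici 0, -(a * f t ^ 2) ≤ f' t) {t : ℝ} (ht : 0 ≤ t) : 0 < f t := by
  set k := a * f 0
  have hmono : MonotoneOn (fun s => f s * exp (s * k)) (Ici 0) := by
    refine monotoneOn_Ici_of_hasDerivAt_nonneg
      (fun s hs => (hf s hs).mul (hasDerivAt_mul_const k).exp) fun s hs => ?_
    have hgrowth : 0 ≤ f' s + k * f s := by
      nlinarith [hlower s hs, mul_nonneg (mul_nonneg ha (hnonneg s hs)) (sub_nonneg.2 (hle s hs))]
    have := mul_nonneg hgrowth (exp_pos (s * k)).le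
    linarith
  have h0t := hmono self_mem_Ici (mem_Ici.2 ht) ht
  simp only [zero_mul, exp_zero, mul_one] at h0t
  exact pos_of_mul_pos_left (hf0.trans_le h0t) (exp_pos _).le

/-- The derivative of `1/f` lies in `[b, a]`. -/
theorem riccati_bounds (hf : ∀ t ∈ Ici 0, HasDerivAt f (f' t) t) (hf0 : 0 < f 0)
    (hnonneg : ∀ t ∈ Ici 0, 0 ≤ f t) (hb : 0 ≤ b)
    (hlower : ∀ t ∈ Ici 0, -(a * f t ^ 2) ≤ f' t) (hupper : ∀ t ∈ Ici 0, f' t ≤ -(b * f t ^ 2))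
    {t : ℝ} (ht : 0 ≤ t) :
    1 / (a * t + (f 0)⁻¹) ≤ f t ∧ f t ≤ 1 / (b * t + (f 0)⁻¹) := by
  have ha : 0 ≤ a := by
    nlinarith [hlower 0 self_mem_Ici, hupper 0 self_mem_Ici, mul_pos hf0 hf0]
  have hle : ∀ s ∈ Ici 0, f s ≤ f 0 := by
    have := monotoneOn_Ici_of_hasDerivAt_nonneg (fun s hs => (hf s hs).neg)
      fun s hs => by nlinarith [hupper s hs, mul_nonneg hb (sq_nonneg (f s))]
    exact fun s hs => neg_le_neg_iff.1 (this self_mem_Ici hs hs)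
  have hpos : ∀ s ∈ Ici 0, 0 < f s := fun s hs =>
    pos_of_neg_mul_sq_le_deriv hf hf0 hnonneg hle ha hlower hs
  have hinv : ∀ s ∈ Ici 0, HasDerivAt (fun u => (f u)⁻¹) (-f' s / f s ^ 2) s :=
    fun s hs => (hf s hs).inv (hpos s hs).ne'
  have hinv_lower : MonotoneOn (fun s => (f s)⁻¹ - b * s) (Ici 0) :=
    monotoneOn_Ici_of_hasDerivAt_nonneg
      (fun s hs => (hinv s hs).sub ((hasDerivAt_id s).const_mul b)) fun s hs => by
        have hsq := pow_pos (hpos s hs) 2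
        rw [mul_one, sub_nonneg, le_div_iff₀ hsq]
        linarith [hupper s hs]
  have hinv_upper : MonotoneOn (fun s => a * s - (f s)⁻¹) (Ici 0) :=
    monotoneOn_Ici_of_hasDerivAt_nonneg
      (fun s hs => ((hasDerivAt_id s).const_mul a).sub (hinv s hs)) fun s hs => by
        have hsq := pow_pos (hpos s hs) 2
        rw [mul_one, sub_nonneg, div_le_iff₀ hsq]
        linarith [hlower s hs]
  have h1 := hinv_lower self_mem_Ici (mem_Ici.2 ht) ht
  have h2 := hinv_upper self_mem_Ici (mem_Ici.2 ht) ht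
  simp only [mul_zero, sub_zero, zero_sub] at h1 h2
  have hft := hpos t (mem_Ici.2 ht)
  rw [← one_div_one_div (f t)]
  constructor
  · exact one_div_le_one_div_of_le (by positivity) (by rw [one_div]; linarith)
  · exact one_div_le_one_div_of_le (by positivity) (by rw [one_div]; linarith)

end Riccati

theorem hasDerivAt_intervalIntegral_of_contDiff {F : ℝ → ℝ → ℝ}
    (hF : ContDiff ℝ 1 fun p : ℝ × ℝ => F p.1 p.2) (a b t : ℝ) :
    HasDerivAt (fun s => ∫ θ in a..b, F s θ) (∫ θ in a..b, deriv (fun s => F s θ) t) t := by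
  set F' : ℝ → ℝ → ℝ := fun s θ => fderiv ℝ (fun p : ℝ × ℝ => F p.1 p.2) (s, θ) (1, 0)
  have hF'c : Continuous fun p : ℝ × ℝ => F' p.1 p.2 :=
    (hF.continuous_fderiv one_ne_zero).clm_apply continuous_const
  have hF_deriv : ∀ s θ, HasDerivAt (fun u => F u θ) (F' s θ) s := fun s θ =>
    (hF.differentiable one_ne_zero (s, θ)).hasFDerivAt.comp_hasDerivAt (f := fun u => (u, θ)) s
      ((hasDerivAt_id s).prodMk (hasDerivAt_const s θ))
  -- `∂ₜF` is dominated by its bound on the compact set `[t - 1, t + 1] × [a, b]`.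
  obtain ⟨M, hM⟩ := (isCompact_Icc.prod isCompact_uIcc).exists_bound_of_continuousOn
    (s := Icc (t - 1) (t + 1) ×ˢ uIcc a b) hF'c.continuousOn
  have hbound : ∀ᵐ θ, θ ∈ uIoc a b → ∀ s ∈ Metric.ball t 1, ‖F' s θ‖ ≤ M := by
    refine Filter.Eventually.of_forall fun θ hθ s hs => hM (s, θ) ⟨?_, uIoc_subset_uIcc hθ⟩
    rw [Real.ball_eq_Ioo] at hs
    exact Ioo_subset_Icc_self hs
  have hF_cont : ∀ s, Continuous (F s) := fun s =>
    hF.continuous.comp (continuous_const.prodMk continuous_id :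
      Continuous fun θ : ℝ => (s, θ))
  have hderiv := (hasDerivAt_integral_of_dominated_loc_of_deriv_le
    (Metric.ball_mem_nhds t one_pos)
    (Filter.Eventually.of_forall fun s => (hF_cont s).aestronglyMeasurable)
    ((hF_cont t).intervalIntegrable a b)
    ((hF'c.comp (by fun_prop : Continuous fun θ : ℝ => (t, θ))).aestronglyMeasurable) hbound
    intervalIntegrable_const (Filter.Eventually.of_forall fun θ _ s _ => hF_deriv s θ)).2
  simpa only [fun θ => (hF_deriv t θ).deriv] using hderiv

theorem abs_sin_sub_abs_sin_of_le {θ x : ℝ} (hx : 0 ≤ x) (hxθ : x ≤ θ) (hθ : θ ≤ π / 4) :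
    |sin (2 * θ - 2 * x)| - |sin (2 * θ + 2 * x)| = -2 * cos (2 * θ) * sin (2 * x) := by
  rw [abs_of_nonneg (sin_nonneg_of_nonneg_of_le_pi (by linarith) (by linarith [pi_pos])),
    abs_of_nonneg (sin_nonneg_of_nonneg_of_le_pi (by linarith) (by linarith [pi_pos])),
    sin_sub, sin_add]
  ring

theorem abs_sin_sub_abs_sin_of_ge {θ x : ℝ} (hθ : 0 ≤ θ) (hθx : θ ≤ x) (hx : x ≤ π / 4) :
    |sin (2 * θ - 2 * x)| - |sin (2 * θ + 2 * x)| = -2 * sin (2 * θ) * cos (2 * x) := by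
  rw [← abs_neg, ← sin_neg,
    abs_of_nonneg (sin_nonneg_of_nonneg_of_le_pi (by linarith) (by linarith [pi_pos])),
    abs_of_nonneg (sin_nonneg_of_nonneg_of_le_pi (by linarith) (by linarith [pi_pos])),
    neg_sub, sin_sub, sin_add]
  ring

namespace RadialEuler

def lowerSinIntegral (g : ℝ → ℝ) (θ : ℝ) : ℝ := ∫ x in (0 : ℝ)..θ, sin (2 * x) * g x

def upperCosIntegral (g : ℝ → ℝ) (θ : ℝ) : ℝ := ∫ x in θ..(π / 4), cos (2 * x) * g x

local notation "A" => lowerSinIntegral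
local notation "B" => upperCosIntegral

theorem streamH_eq {g : ℝ → ℝ} (hg : Continuous g) {θ : ℝ} (hθ : θ ∈ Icc 0 (π / 4)) :
    streamH g θ = -(1 / 2) * (cos (2 * θ) * A g θ + sin (2 * θ) * B g θ) := by
  have hint : ∀ a b, IntervalIntegrable
      (fun x => (|sin (2 * θ - 2 * x)| - |sin (2 * θ + 2 * x)|) * g x) volume a b :=
    fun a b => (by fun_prop : Continuous _).intervalIntegrable a b
  have hlow : ∫ x in (0 : ℝ)..θ, (|sin (2 * θ - 2 * x)| - |sin (2 * θ + 2 * x)|) * g x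
      = -2 * cos (2 * θ) * A g θ := by
    rw [lowerSinIntegral, ← intervalIntegral.integral_const_mul]
    refine integral_congr fun x hx => ?_
    rw [uIcc_of_le hθ.1] at hx
    simp only [abs_sin_sub_abs_sin_of_le hx.1 hx.2 hθ.2]
    ring
  have hup : ∫ x in θ..(π / 4), (|sin (2 * θ - 2 * x)| - |sin (2 * θ + 2 * x)|) * g x
      = -2 * sin (2 * θ) * B g θ := by
    rw [upperCosIntegral, ← intervalIntegral.integral_const_mul]
    refine integral_congr fun x hx => ?_
    rw [uIcc_of_le hθ.2] at hx
    simp only [abs_sin_sub_abs_sin_of_ge hθ.1 hx.1 hx.2]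
    ring
  rw [streamH, ← integral_add_adjacent_intervals (hint 0 θ) (hint θ (π / 4)), hlow, hup]
  ring

theorem hasDerivAt_lowerSinIntegral {g : ℝ → ℝ} (hg : Continuous g) (θ : ℝ) :
    HasDerivAt (A g) (sin (2 * θ) * g θ) θ :=
  ((by fun_prop : Continuous fun x => sin (2 * x) * g x).integral_hasStrictDerivAt 0 θ).hasDerivAt

theorem hasDerivAt_upperCosIntegral {g : ℝ → ℝ} (hg : Continuous g) (θ : ℝ) :
    HasDerivAt (B g) (-(cos (2 * θ) * g θ)) θ := by
  have hc : Continuous fun x => cos (2 * x) * g x := by fun_prop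
  exact integral_hasDerivAt_left (hc.intervalIntegrable _ _)
    hc.stronglyMeasurable.stronglyMeasurableAtFilter hc.continuousAt

/-- A primitive of `θ ↦ -2 H(θ) g'(θ)` on `[0, π/4]`. -/
def fluxPotential (g : ℝ → ℝ) (θ : ℝ) : ℝ :=
  (cos (2 * θ) * A g θ + sin (2 * θ) * B g θ) * g θ + A g θ ^ 2 + B g θ ^ 2

theorem hasDerivAt_fluxPotential {g : ℝ → ℝ} (hg : ContDiff ℝ 1 g) (θ : ℝ) :
    HasDerivAt (fluxPotential g)
      ((cos (2 * θ) * A g θ + sin (2 * θ) * B g θ) * deriv g θ) θ := by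
  have hA := hasDerivAt_lowerSinIntegral hg.continuous θ
  have hB := hasDerivAt_upperCosIntegral hg.continuous θ
  have hcos : HasDerivAt (fun x => cos (2 * x)) (-sin (2 * θ) * 2) θ :=
    ((hasDerivAt_id θ).const_mul 2).cos.congr_deriv (by simp)
  have hsin : HasDerivAt (fun x => sin (2 * x)) (cos (2 * θ) * 2) θ :=
    ((hasDerivAt_id θ).const_mul 2).sin.congr_deriv (by simp)
  have hg' : HasDerivAt g (deriv g θ) θ := (hg.differentiable one_ne_zero θ).hasDerivAt
  exact ((((hcos.fun_mul hA).fun_add (hsin.fun_mul hB)).fun_mul hg').fun_add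
    (hA.fun_pow 2)).fun_add (hB.fun_pow 2) |>.congr_deriv (by norm_num; ring)

theorem integral_neg_two_mul_streamH_mul_deriv {g : ℝ → ℝ} (hg : ContDiff ℝ 1 g) :
    ∫ θ in (0 : ℝ)..(π / 4), -(2 * streamH g θ * deriv g θ) = A g (π / 4) ^ 2 - B g 0 ^ 2 := by
  have hA : Continuous (A g) := continuous_iff_continuousAt.2 fun θ =>
    (hasDerivAt_lowerSinIntegral hg.continuous θ).continuousAt
  have hB : Continuous (B g) := continuous_iff_continuousAt.2 fun θ =>
    (hasDerivAt_upperCosIntegral hg.continuous θ).continuousAt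
  have hg' : Continuous (deriv g) := hg.continuous_deriv le_rfl
  calc ∫ θ in (0 : ℝ)..(π / 4), -(2 * streamH g θ * deriv g θ)
      = ∫ θ in (0 : ℝ)..(π / 4), (cos (2 * θ) * A g θ + sin (2 * θ) * B g θ) * deriv g θ := by
        refine integral_congr fun θ hθ => ?_
        rw [uIcc_of_le (by positivity)] at hθ
        simp only [streamH_eq hg.continuous hθ]
        ring
    _ = fluxPotential g (π / 4) - fluxPotential g 0 :=
        integral_eq_sub_of_hasDerivAt (fun θ _ => hasDerivAt_fluxPotential hg θ)
          ((by fun_prop : Continuous _).intervalIntegrable _ _)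
    _ = A g (π / 4) ^ 2 - B g 0 ^ 2 := by
        simp [fluxPotential, lowerSinIntegral, upperCosIntegral,
          show 2 * (π / 4) = π / 2 by ring]

theorem hasDerivAt_mass {h : ℝ → ℝ → ℝ} (hC1 : ContDiff ℝ 1 fun p : ℝ × ℝ => h p.1 p.2) {t : ℝ}
    (hPDE : ∀ θ, deriv (fun s => h s θ) t + 2 * streamH (h t) θ * deriv (h t) θ = 0) :
    HasDerivAt (mass h) (A (h t) (π / 4) ^ 2 - B (h t) 0 ^ 2) t := by
  have hdt : ∀ θ, deriv (fun s => h s θ) t = -(2 * streamH (h t) θ * deriv (h t) θ) :=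
    fun θ => eq_neg_of_add_eq_zero_left (hPDE θ)
  have hslice : ContDiff ℝ 1 (h t) := hC1.comp (contDiff_const.prodMk contDiff_id)
  have := hasDerivAt_intervalIntegral_of_contDiff hC1 0 (π / 4) t
  rwa [integral_congr fun θ _ => hdt θ, integral_neg_two_mul_streamH_mul_deriv hslice] at this

section Moments

variable {g : ℝ → ℝ} {ε : ℝ}

theorem lowerSinIntegral_nonneg (hg : ∀ θ ∈ Icc 0 (π / 4), 0 ≤ g θ) : 0 ≤ A g (π / 4) :=
  integral_nonneg (by positivity) fun x hx =>
    mul_nonneg (sin_nonneg_of_nonneg_of_le_pi (by linarith [hx.1]) (by linarith [hx.2, pi_pos]))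
      (hg x hx)

theorem lowerSinIntegral_le (hg : Continuous g) (hnonneg : ∀ θ ∈ Icc 0 (π / 4), 0 ≤ g θ)
    (hsupp : ∀ θ ∈ Icc ε (π / 4), g θ = 0) :
    A g (π / 4) ≤ 2 * ε * ∫ θ in (0 : ℝ)..(π / 4), g θ := by
  rw [← intervalIntegral.integral_const_mul]
  refine integral_mono_on (by positivity) ((by fun_prop : Continuous _).intervalIntegrable _ _)
    ((by fun_prop : Continuous _).intervalIntegrable _ _) fun x hx => ?_
  rcases le_or_gt x ε with hxε | hεx
  · exact mul_le_mul_of_nonneg_right ((sin_le (by linarith [hx.1])).trans (by linarith))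
      (hnonneg x hx)
  · simp [hsupp x ⟨hεx.le, hx.2⟩]

theorem upperCosIntegral_nonneg (hg : ∀ θ ∈ Icc 0 (π / 4), 0 ≤ g θ) : 0 ≤ B g 0 :=
  integral_nonneg (by positivity) fun x hx =>
    mul_nonneg (cos_nonneg_of_mem_Icc ⟨by linarith [hx.1, pi_pos], by linarith [hx.2]⟩) (hg x hx)

theorem upperCosIntegral_le (hg : Continuous g) (hnonneg : ∀ θ ∈ Icc 0 (π / 4), 0 ≤ g θ) :
    B g 0 ≤ ∫ θ in (0 : ℝ)..(π / 4), g θ :=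
  integral_mono_on (by positivity) ((by fun_prop : Continuous _).intervalIntegrable _ _)
    (hg.intervalIntegrable _ _) fun x hx =>
      mul_le_of_le_one_left (hnonneg x hx) (cos_le_one _)

theorem cos_mul_le_upperCosIntegral (hg : Continuous g) (hε : ε ≤ π / 2)
    (hnonneg : ∀ θ ∈ Icc 0 (π / 4), 0 ≤ g θ) (hsupp : ∀ θ ∈ Icc ε (π / 4), g θ = 0) :
    cos (2 * ε) * ∫ θ in (0 : ℝ)..(π / 4), g θ ≤ B g 0 := by
  rw [← intervalIntegral.integral_const_mul]
  refine integral_mono_on (by positivity) ((by fun_prop : Continuous _).intervalIntegrable _ _)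
    ((by fun_prop : Continuous _).intervalIntegrable _ _) fun x hx => ?_
  rcases le_or_gt x ε with hxε | hεx
  · exact mul_le_mul_of_nonneg_right
      (cos_le_cos_of_nonneg_of_le_pi (by linarith [hx.1]) (by linarith) (by linarith))
      (hnonneg x hx)
  · simp [hsupp x ⟨hεx.le, hx.2⟩]

theorem sq_lowerSinIntegral_sub_sq_upperCosIntegral_bounds (hg : Continuous g) (hε0 : 0 ≤ ε)
    (hε1 : ε ≤ 1 / 4) (hnonneg : ∀ θ ∈ Icc 0 (π / 4), 0 ≤ g θ)
    (hsupp : ∀ θ ∈ Icc ε (π / 4), g θ = 0) :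
    -(∫ θ in (0 : ℝ)..(π / 4), g θ) ^ 2 ≤ A g (π / 4) ^ 2 - B g 0 ^ 2 ∧
      A g (π / 4) ^ 2 - B g 0 ^ 2 ≤ -((1 - 8 * ε ^ 2) * (∫ θ in (0 : ℝ)..(π / 4), g θ) ^ 2) := by
  set I := ∫ θ in (0 : ℝ)..(π / 4), g θ
  have hI : 0 ≤ I := integral_nonneg (by positivity) hnonneg
  have hS0 := lowerSinIntegral_nonneg hnonneg
  have hS := lowerSinIntegral_le hg hnonneg hsupp
  have hC0 := upperCosIntegral_nonneg hnonneg
  have hC := upperCosIntegral_le hg hnonneg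
  have hcos : 1 - 2 * ε ^ 2 ≤ cos (2 * ε) := by nlinarith [one_sub_sq_div_two_le_cos (x := 2 * ε)]
  have hC' : (1 - 2 * ε ^ 2) * I ≤ B g 0 :=
    (mul_le_mul_of_nonneg_right hcos hI).trans
      (cos_mul_le_upperCosIntegral hg (by linarith [pi_gt_three]) hnonneg hsupp)
  constructor
  · nlinarith [mul_le_mul hC hC hC0 hI]
  · nlinarith [mul_le_mul hS hS hS0 (by positivity), mul_le_mul hC' hC' (by nlinarith) hC0]

end Moments

end RadialEuler

theorem oneD_Euler_L1_decay_general (ε : ℝ) (hε0 : 0 < ε) (hε1 : ε ≤ 1 / 4)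
    (h : ℝ → ℝ → ℝ)
    (hC1 : ContDiff ℝ 1 (fun p : ℝ × ℝ => h p.1 p.2))
    (hnonneg : ∀ t ≥ (0 : ℝ), ∀ θ ∈ Icc (0 : ℝ) (Real.pi / 4), 0 ≤ h t θ)
    (hsupp : ∀ t ≥ (0 : ℝ), ∀ θ ∈ Icc ε (Real.pi / 4), h t θ = 0)
    (hPDE : ∀ t ≥ (0 : ℝ), ∀ θ : ℝ,
      deriv (fun s => h s θ) t + 2 * streamH (h t) θ * deriv (h t) θ = 0)
    (hI0 : 0 < mass h 0) :
    ∀ t ≥ (0 : ℝ),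
      1 / (t + (mass h 0)⁻¹) ≤ mass h t ∧
        mass h t ≤ 1 / ((1 - 8 * ε ^ 2) * t + (mass h 0)⁻¹) := by
  intro t ht
  have hcont : ∀ s, Continuous (h s) := fun s =>
    hC1.continuous.comp (continuous_const.prodMk continuous_id : Continuous fun θ : ℝ => (s, θ))
  have hbounds (s : ℝ) (hs : s ∈ Ici 0) :=
    RadialEuler.sq_lowerSinIntegral_sub_sq_upperCosIntegral_bounds (hcont s) hε0.le hε1
      (hnonneg s hs) (hsupp s hs)
  simpa only [one_mul] using riccati_bounds (a := 1)
    (fun s hs => RadialEuler.hasDerivAt_mass hC1 (hPDE s hs)) hI0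
    (fun s hs => integral_nonneg (by positivity) (hnonneg s hs)) (by nlinarith)
    (fun s hs => by rw [one_mul]; exact (hbounds s hs).1) (fun s hs => (hbounds s hs).2) ht

/-- L¹-decay for the 1D equation `∂ₜh + 2H ∂_θh = 0` with 4-fold symmetric, odd,
nonnegative data supported in `[0, ε]`:
`1/(t + I(0)⁻¹) ≤ I(t) ≤ 1/((1 − 8ε²)t + I(0)⁻¹)`. -/
theorem oneD_Euler_L1_decay (ε : ℝ) (hε0 : 0 < ε) (hε1 : ε ≤ 1 / 4)
    (h : ℝ → ℝ → ℝ)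
    (hC1 : ContDiff ℝ 1 (fun p : ℝ × ℝ => h p.1 p.2))
    (hper : ∀ t ≥ (0 : ℝ), ∀ θ : ℝ, h t (θ + 2 * Real.pi) = h t θ)
    (hsym : ∀ t ≥ (0 : ℝ), ∀ θ : ℝ, h t (θ + Real.pi / 2) = h t θ)
    (hodd : ∀ t ≥ (0 : ℝ), ∀ θ : ℝ, h t (-θ) = -h t θ)
    (hnonneg : ∀ t ≥ (0 : ℝ), ∀ θ ∈ Icc (0 : ℝ) (Real.pi / 4), 0 ≤ h t θ)
    (hsupp : ∀ t ≥ (0 : ℝ), ∀ θ ∈ Icc ε (Real.pi / 4), h t θ = 0)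
    (hPDE : ∀ t ≥ (0 : ℝ), ∀ θ : ℝ,
      deriv (fun s => h s θ) t + 2 * streamH (h t) θ * deriv (h t) θ = 0)
    (hI0 : 0 < mass h 0) :
    ∀ t ≥ (0 : ℝ),
      1 / (t + (mass h 0)⁻¹) ≤ mass h t ∧
        mass h t ≤ 1 / ((1 - 8 * ε ^ 2) * t + (mass h 0)⁻¹) :=
  oneD_Euler_L1_decay_general ε hε0 hε1 h hC1 hnonneg hsupp hPDE hI0
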